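/- Let μ > 0 and let γ₁ be a closed regular curve in S² with min κ₁ > μ whose restriction to [a₁,b₁] is a negative shell with image Σ₁. Let C be a μ-circle such that Σ₁ lies in the closure of the interior domain of C and C ∩ Σ₁ = {P, Q} with P = γ₁(d₁), Q = γ₁(c₁), where a₁ < c₁ < d₁ < b₁. For t ∈ [d₁,b₁] let Ĉ_t be the tangent μ-circle to γ₁ at γ₁(t) on the normal side. Then for each t ∈ [d₁,b₁], the circle Ĉ_t does not meet γ₁((t,b₁]); that is, γ₁(x) ∉ Ĉ_t for every x ∈ (t,b₁]. -/

import Mathlib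

noncomputable section

open Matrix

/-- Euclidean 3-space (as triples of reals). -/
abbrev R3 : Type := Fin 3 → ℝ

/-- The Euclidean inner product on ℝ³. -/
def dot3 (a b : R3) : ℝ := a 0 * b 0 + a 1 * b 1 + a 2 * b 2

/-- The Euclidean norm on ℝ³. -/
def norm3 (a : R3) : ℝ := Real.sqrt (dot3 a a)

/-- The cross product on ℝ³. -/
def cross3 (a b : R3) : R3 :=
  ![a 1 * b 2 - a 2 * b 1, a 2 * b 0 - a 0 * b 2, a 0 * b 1 - a 1 * b 0]

/-- The determinant of three vectors in ℝ³. -/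
def det3 (a b c : R3) : ℝ := dot3 a (cross3 b c)

/-- `γ : ℝ → ℝ³` is a regular curve in the unit sphere S²:
it is smooth, takes values in S², and has nowhere-vanishing derivative. -/
structure IsRegularCurve (γ : ℝ → R3) : Prop where
  smooth : ContDiff ℝ (⊤ : ℕ∞) γ
  sphere : ∀ s, dot3 (γ s) (γ s) = 1
  reg : ∀ s, deriv γ s ≠ 0

/-- The geodesic curvature `κ(s) = det(γ, γ', γ'')/|γ'|³` of a curve in S². -/
def kappa (γ : ℝ → R3) (s : ℝ) : ℝ :=
  det3 (γ s) (deriv γ s) (deriv (deriv γ) s) / norm3 (deriv γ s) ^ 3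

/-- The unit normal `n(s) = (γ × γ')/|γ'|` of a curve in S². -/
def unitNormal (γ : ℝ → R3) (s : ℝ) : R3 :=
  (norm3 (deriv γ s))⁻¹ • cross3 (γ s) (deriv γ s)

/-- `γ` is closed of period `l > 0`. -/
def HasPeriod (γ : ℝ → R3) (l : ℝ) : Prop := 0 < l ∧ ∀ s, γ (s + l) = γ s

/-- 2×2 complex matrices. -/
abbrev Mat2 := Matrix (Fin 2) (Fin 2) ℂ

def E1 : Mat2 := !![0, Complex.I; Complex.I, 0]
def E2 : Mat2 := !![0, -1; 1, 0]
def E3 : Mat2 := !![Complex.I, 0; 0, -Complex.I]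

/-- The identification of ℝ³ with su(2) via the orthonormal basis e₁, e₂, e₃. -/
def toSu2 (v : R3) : Mat2 := (v 0 : ℂ) • E1 + (v 1 : ℂ) • E2 + (v 2 : ℂ) • E3

/-- The adjoint action `Ad(a)x = a x a⁻¹`. -/
def AdM (a x : Mat2) : Mat2 := a * x * a⁻¹

/-- `c : ℝ → SU(2)` is a lift of the regular curve `γ` in S²:
it is smooth (entrywise), takes values in SU(2), and satisfies
`Ad(c(s))e₃ = γ(s)` and `Ad(c(s))e₁ = γ'(s)/|γ'(s)|` under `toSu2`. -/
structure IsLift (γ : ℝ → R3) (c : ℝ → Mat2) : Prop where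
  mem : ∀ s, c s ∈ Matrix.specialUnitaryGroup (Fin 2) ℂ
  smooth : ∀ i j, ContDiff ℝ (⊤ : ℕ∞) fun s => c s i j
  ad3 : ∀ s, AdM (c s) E3 = toSu2 (γ s)
  ad1 : ∀ s, AdM (c s) E1 = toSu2 ((norm3 (deriv γ s))⁻¹ • deriv γ s)

/-- The entrywise derivative of a matrix-valued curve. -/
def matDeriv (c : ℝ → Mat2) (s : ℝ) : Mat2 :=
  Matrix.of fun i j => deriv (fun t => c t i j) s

/-- The map `f_{γ₁,γ₂}(s₁,s₂) = c₁(0)⁻¹ c₁(s₁) c₂(s₂)⁻¹ c₂(0)` associated to lifts `c₁, c₂`. -/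
def fmap (c1 c2 : ℝ → Mat2) (s1 s2 : ℝ) : Mat2 :=
  (c1 0)⁻¹ * c1 s1 * (c2 s2)⁻¹ * c2 0

/-- `(γ₁, γ₂)` is an admissible pair. -/
structure IsAdmissiblePair (γ1 γ2 : ℝ → R3) : Prop where
  reg1 : IsRegularCurve γ1
  reg2 : IsRegularCurve γ2
  param1 : ∀ s, norm3 (deriv γ1 s) ^ 2 * (1 + kappa γ1 s ^ 2) = 4
  param2 : ∀ s, norm3 (deriv γ2 s) ^ 2 * (1 + kappa γ2 s ^ 2) = 4
  curv : ∀ s1 s2, kappa γ2 s2 < kappa γ1 s1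

/-- The restriction of `γ` to `[a,b]` is a shell. -/
def IsShell (γ : ℝ → R3) (a b : ℝ) : Prop :=
  a < b ∧ Set.InjOn γ (Set.Ico a b) ∧ γ a = γ b ∧
    LinearIndependent ℝ ![deriv γ a, deriv γ b]

/-- A positive shell: `det(γ(a), γ'(a), γ'(b)) < 0`. -/
def IsPositiveShell (γ : ℝ → R3) (a b : ℝ) : Prop :=
  IsShell γ a b ∧ det3 (γ a) (deriv γ a) (deriv γ b) < 0

/-- A negative shell: `det(γ(a), γ'(a), γ'(b)) > 0`. -/
def IsNegativeShell (γ : ℝ → R3) (a b : ℝ) : Prop :=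
  IsShell γ a b ∧ 0 < det3 (γ a) (deriv γ a) (deriv γ b)

/-- The unit sphere S² in ℝ³. -/
def sphere2 : Set R3 := {x | dot3 x x = 1}

/-- The μ-circle with center `o ∈ S²`. -/
def muCircle (μ : ℝ) (o : R3) : Set R3 :=
  {x | dot3 x x = 1 ∧ dot3 x o = μ / Real.sqrt (1 + μ ^ 2)}

/-- The (open) interior domain of the μ-circle with center `o ∈ S²`. -/
def muDisk (μ : ℝ) (o : R3) : Set R3 :=
  {x | dot3 x x = 1 ∧ μ / Real.sqrt (1 + μ ^ 2) < dot3 x o}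

def normalize3 (v : R3) : R3 := (norm3 v)⁻¹ • v

/-- `Δ` is the interior domain of the shell `γ|_{[a,b]}`: it is a connected component of the
complement of the image of the shell in S², and for each `s ∈ (a,b)` the points obtained by
pushing `γ(s)` slightly in the direction `σ • n(s)` (σ = 1 for a positive shell, σ = -1 for a
negative shell) belong to `Δ`. -/
def IsInteriorDomain (γ : ℝ → R3) (a b σ : ℝ) (Δ : Set R3) : Prop :=
  (∃ p ∈ sphere2 \ γ '' Set.Icc a b,
      Δ = connectedComponentIn (sphere2 \ γ '' Set.Icc a b) p) ∧
    ∀ s ∈ Set.Ioo a b, ∃ ε > 0, ∀ δ ∈ Set.Ioo (0 : ℝ) ε,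
      normalize3 (γ s + (σ * δ) • unitNormal γ s) ∈ Δ

/-- The center `o_t = (μ γ(t) + n(t))/√(1+μ²)` of the tangent μ-circle to `γ` at `γ(t)`
on the normal side. -/
def tangentCenter (μ : ℝ) (γ : ℝ → R3) (t : ℝ) : R3 :=
  (Real.sqrt (1 + μ ^ 2))⁻¹ • (μ • γ t + unitNormal γ t)

/-- The rotation of ℝ³ through angle `θ` about the oriented (unit) axis `o`. -/
def rot3 (o : R3) (θ : ℝ) (x : R3) : R3 :=
  Real.cos θ • x + Real.sin θ • cross3 o x + ((1 - Real.cos θ) * dot3 o x) • o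

/-- A closed regular curve of period `l` is generic: every self-intersection is a
transversal double point. -/
def IsGeneric (γ : ℝ → R3) (l : ℝ) : Prop :=
  ∀ s t : ℝ, γ s = γ t → (¬∃ k : ℤ, s - t = k * l) →
    LinearIndependent ℝ ![deriv γ s, deriv γ t] ∧
      ∀ u : ℝ, γ u = γ s → (∃ k : ℤ, u - s = k * l) ∨ (∃ k : ℤ, u - t = k * l)

/-- The number of crossings (self-intersection points) of a closed curve of period `l`. -/
def crossings (γ : ℝ → R3) (l : ℝ) : ℕ :=
  Set.ncard {p : R3 | ∃ s t : ℝ, γ s = p ∧ γ t = p ∧ ¬∃ k : ℤ, s - t = k * l}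

/-- The spherical (geodesic) distance on S³, identified with SU(2):
`dist(A,B) = arccos(Re trace(A Bᴴ)/2)`, which corresponds to the round distance on the
unit sphere S³ ⊂ ℝ⁴. -/
def distS3 (A B : Mat2) : ℝ := Real.arccos ((Matrix.trace (A * Bᴴ)).re / 2)

/-- The extrinsic diameter of the image of the map `f` associated to the lifts `c₁, c₂`. -/
def extDiam (c1 c2 : ℝ → Mat2) : ℝ :=
  sSup {d : ℝ | ∃ s1 s2 u1 u2 : ℝ, d = distS3 (fmap c1 c2 s1 s2) (fmap c1 c2 u1 u2)}

/-- The parallel curve `γ^θ = (cos θ) γ + (sin θ) n`. -/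
def parallelCurve (γ : ℝ → R3) (θ : ℝ) (s : ℝ) : R3 :=
  Real.cos θ • γ s + Real.sin θ • unitNormal γ s

/-- The arclength-type parameter `s(t) = (1/2)∫₀ᵗ |γ'(u)|√(1+κ(u)²) du`. -/
def arcParam (γ : ℝ → R3) (t : ℝ) : ℝ :=
  (1 / 2) * ∫ u in (0 : ℝ)..t, norm3 (deriv γ u) * Real.sqrt (1 + kappa γ u ^ 2)


section Stmt11Helpers

lemma cross3_e0 (a b : R3) : cross3 a b 0 = a 1 * b 2 - a 2 * b 1 := rfl
lemma cross3_e1 (a b : R3) : cross3 a b 1 = a 2 * b 0 - a 0 * b 2 := rfl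
lemma cross3_e2 (a b : R3) : cross3 a b 2 = a 0 * b 1 - a 1 * b 0 := rfl

lemma d3comm (a b : R3) : dot3 a b = dot3 b a := by unfold dot3; ring

lemma dot3_self_nonneg (v : R3) : 0 ≤ dot3 v v := by
  unfold dot3; nlinarith [mul_self_nonneg (v 0), mul_self_nonneg (v 1), mul_self_nonneg (v 2)]

lemma dot3_self_eq_zero {v : R3} (h : dot3 v v = 0) : v = 0 := by
  unfold dot3 at h
  funext i
  fin_cases i <;>
    simp <;>
    nlinarith [mul_self_nonneg (v 0), mul_self_nonneg (v 1), mul_self_nonneg (v 2)]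

lemma dot3_self_pos {v : R3} (h : v ≠ 0) : 0 < dot3 v v :=
  lt_of_le_of_ne (dot3_self_nonneg v) (fun h0 => h (dot3_self_eq_zero h0.symm))

lemma norm3_pos {v : R3} (h : v ≠ 0) : 0 < norm3 v := Real.sqrt_pos.mpr (dot3_self_pos h)

lemma norm3_sq {v : R3} : norm3 v ^ 2 = dot3 v v := Real.sq_sqrt (dot3_self_nonneg v)

-- bilinearity
lemma dot3_add_left (a b c : R3) : dot3 (a + b) c = dot3 a c + dot3 b c := by
  unfold dot3; simp [Pi.add_apply]; ring
lemma dot3_add_right (a b c : R3) : dot3 a (b + c) = dot3 a b + dot3 a c := by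
  unfold dot3; simp [Pi.add_apply]; ring
lemma dot3_sub_left (a b c : R3) : dot3 (a - b) c = dot3 a c - dot3 b c := by
  unfold dot3; simp [Pi.sub_apply]; ring
lemma dot3_smul_left (r : ℝ) (a b : R3) : dot3 (r • a) b = r * dot3 a b := by
  unfold dot3; simp [Pi.smul_apply, smul_eq_mul]; ring
lemma dot3_smul_right (r : ℝ) (a b : R3) : dot3 a (r • b) = r * dot3 a b := by
  unfold dot3; simp [Pi.smul_apply, smul_eq_mul]; ring
lemma dot3_zero_left (a : R3) : dot3 0 a = 0 := by unfold dot3; simp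

-- cross product orthogonality & Lagrange, pure identities
lemma dot3_cross_left (u v : R3) : dot3 (cross3 u v) u = 0 := by
  unfold dot3; simp [cross3_e0, cross3_e1, cross3_e2]; ring
lemma dot3_cross_right (u v : R3) : dot3 (cross3 u v) v = 0 := by
  unfold dot3; simp [cross3_e0, cross3_e1, cross3_e2]; ring
lemma dot3_cross_left' (u v : R3) : dot3 u (cross3 u v) = 0 := by
  rw [d3comm]; exact dot3_cross_left u v
lemma dot3_cross_right' (u v : R3) : dot3 v (cross3 u v) = 0 := by
  rw [d3comm]; exact dot3_cross_right u v
lemma lagrange3 (u v : R3) :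
    dot3 (cross3 u v) (cross3 u v) = dot3 u u * dot3 v v - dot3 u v ^ 2 := by
  unfold dot3; simp [cross3_e0, cross3_e1, cross3_e2]; ring

lemma cross3_smul_right (r : ℝ) (u v : R3) : cross3 u (r • v) = r • cross3 u v := by
  funext i
  fin_cases i <;> simp [cross3_e0, cross3_e1, cross3_e2, Pi.smul_apply, smul_eq_mul] <;> ring

lemma det3_cyclic (a b c : R3) : det3 c a b = det3 a b c := by
  unfold det3 dot3; simp [cross3_e0, cross3_e1, cross3_e2]; ring

lemma orth3_eq_zero {u v x : R3} (huu : dot3 u u = 1) (hvv : dot3 v v = 1)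
    (huv : dot3 u v = 0) (h1 : dot3 x u = 0) (h2 : dot3 x v = 0)
    (h3 : dot3 x (cross3 u v) = 0) : x = 0 := by
  unfold dot3 at huu hvv huv h1 h2 h3
  simp only [cross3_e0, cross3_e1, cross3_e2] at h3
  have e0 : x 0 = 0 := by
    linear_combination (-(x 0) * (v 0 * v 0 + v 1 * v 1 + v 2 * v 2)) * huu
      + (-(x 0)) * hvv + (x 0 * (u 0 * v 0 + u 1 * v 1 + u 2 * v 2)) * huv
      + (v 1 * (u 0 * v 1 - u 1 * v 0) - v 2 * (u 2 * v 0 - u 0 * v 2)) * h1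
      + (-(u 1 * (u 0 * v 1 - u 1 * v 0) - u 2 * (u 2 * v 0 - u 0 * v 2))) * h2
      + (u 1 * v 2 - u 2 * v 1) * h3
  have e1 : x 1 = 0 := by
    linear_combination (-(x 1) * (v 0 * v 0 + v 1 * v 1 + v 2 * v 2)) * huu
      + (-(x 1)) * hvv + (x 1 * (u 0 * v 0 + u 1 * v 1 + u 2 * v 2)) * huv
      + (-(v 0 * (u 0 * v 1 - u 1 * v 0) - v 2 * (u 1 * v 2 - u 2 * v 1))) * h1
      + (u 0 * (u 0 * v 1 - u 1 * v 0) - u 2 * (u 1 * v 2 - u 2 * v 1)) * h2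
      + (u 2 * v 0 - u 0 * v 2) * h3
  have e2 : x 2 = 0 := by
    linear_combination (-(x 2) * (v 0 * v 0 + v 1 * v 1 + v 2 * v 2)) * huu
      + (-(x 2)) * hvv + (x 2 * (u 0 * v 0 + u 1 * v 1 + u 2 * v 2)) * huv
      + (v 0 * (u 2 * v 0 - u 0 * v 2) - v 1 * (u 1 * v 2 - u 2 * v 1)) * h1
      + (-(u 0 * (u 2 * v 0 - u 0 * v 2) - u 1 * (u 1 * v 2 - u 2 * v 1))) * h2
      + (u 0 * v 1 - u 1 * v 0) * h3
  funext i
  fin_cases i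
  · exact e0
  · exact e1
  · exact e2

/-- Orthonormal expansion: if `u, v` are orthonormal then any `a` equals its expansion
in the orthonormal basis `u, v, u × v`. -/
lemma expand3 {u v : R3} (huu : dot3 u u = 1) (hvv : dot3 v v = 1) (huv : dot3 u v = 0)
    (a : R3) :
    a = dot3 a u • u + dot3 a v • v + dot3 a (cross3 u v) • cross3 u v := by
  have hr : a - (dot3 a u • u + dot3 a v • v + dot3 a (cross3 u v) • cross3 u v) = 0 := by
    apply orth3_eq_zero huu hvv huv
    · rw [dot3_sub_left, dot3_add_left, dot3_add_left, dot3_smul_left, dot3_smul_left,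
        dot3_smul_left, huu, dot3_cross_left, d3comm v u, huv]
      ring
    · rw [dot3_sub_left, dot3_add_left, dot3_add_left, dot3_smul_left, dot3_smul_left,
        dot3_smul_left, hvv, dot3_cross_right, huv]
      ring
    · rw [dot3_sub_left, dot3_add_left, dot3_add_left, dot3_smul_left, dot3_smul_left,
        dot3_smul_left, dot3_cross_left', dot3_cross_right', lagrange3, huu, hvv, huv]
      ring
  exact sub_eq_zero.mp hr

-- Calculus helpers
lemma hasDerivAt_dot3 {f g : ℝ → R3} {f' g' : R3} {s : ℝ}
    (hf : HasDerivAt f f' s) (hg : HasDerivAt g g' s) :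
    HasDerivAt (fun x => dot3 (f x) (g x)) (dot3 f' (g s) + dot3 (f s) g') s := by
  have hfi : ∀ i, HasDerivAt (fun x => f x i) (f' i) s := fun i => hasDerivAt_pi.mp hf i
  have hgi : ∀ i, HasDerivAt (fun x => g x i) (g' i) s := fun i => hasDerivAt_pi.mp hg i
  have key := (((hfi 0).mul (hgi 0)).add ((hfi 1).mul (hgi 1))).add ((hfi 2).mul (hgi 2))
  have hv : dot3 f' (g s) + dot3 (f s) g' =
      f' 0 * g s 0 + f s 0 * g' 0 + (f' 1 * g s 1 + f s 1 * g' 1) +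
        (f' 2 * g s 2 + f s 2 * g' 2) := by unfold dot3; ring
  rw [hv]; exact key

lemma hasDerivAt_cross3 {f g : ℝ → R3} {f' g' : R3} {s : ℝ}
    (hf : HasDerivAt f f' s) (hg : HasDerivAt g g' s) :
    HasDerivAt (fun x => cross3 (f x) (g x)) (cross3 f' (g s) + cross3 (f s) g') s := by
  have hfi : ∀ i, HasDerivAt (fun x => f x i) (f' i) s := fun i => hasDerivAt_pi.mp hf i
  have hgi : ∀ i, HasDerivAt (fun x => g x i) (g' i) s := fun i => hasDerivAt_pi.mp hg i
  apply hasDerivAt_pi.mpr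
  intro i
  fin_cases i
  · have key := ((hfi 1).mul (hgi 2)).sub ((hfi 2).mul (hgi 1))
    have hv : (cross3 f' (g s) + cross3 (f s) g') 0 =
        f' 1 * g s 2 + f s 1 * g' 2 - (f' 2 * g s 1 + f s 2 * g' 1) := by
      simp [Pi.add_apply, cross3_e0]; ring
    simpa [cross3_e0, hv, Pi.mul_def, Pi.sub_def] using key
  · have key := ((hfi 2).mul (hgi 0)).sub ((hfi 0).mul (hgi 2))
    have hv : (cross3 f' (g s) + cross3 (f s) g') 1 =
        f' 2 * g s 0 + f s 2 * g' 0 - (f' 0 * g s 2 + f s 0 * g' 2) := by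
      simp [Pi.add_apply, cross3_e1]; ring
    simpa [cross3_e1, hv, Pi.mul_def, Pi.sub_def] using key
  · have key := ((hfi 0).mul (hgi 1)).sub ((hfi 1).mul (hgi 0))
    have hv : (cross3 f' (g s) + cross3 (f s) g') 2 =
        f' 0 * g s 1 + f s 0 * g' 1 - (f' 1 * g s 0 + f s 1 * g' 0) := by
      simp [Pi.add_apply, cross3_e2]; ring
    simpa [cross3_e2, hv, Pi.mul_def, Pi.sub_def] using key

lemma continuous_dot3 {α : Type*} [TopologicalSpace α] {f g : α → R3}
    (hf : Continuous f) (hg : Continuous g) : Continuous fun a => dot3 (f a) (g a) := by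
  unfold dot3
  exact ((((continuous_apply 0).comp hf).mul ((continuous_apply 0).comp hg)).add
    (((continuous_apply 1).comp hf).mul ((continuous_apply 1).comp hg))).add
    (((continuous_apply 2).comp hf).mul ((continuous_apply 2).comp hg))

lemma continuous_cross3 {α : Type*} [TopologicalSpace α] {f g : α → R3}
    (hf : Continuous f) (hg : Continuous g) : Continuous fun a => cross3 (f a) (g a) := by
  apply continuous_pi
  intro i
  fin_cases i
  · simpa [cross3_e0, Function.comp_def, Pi.mul_def, Pi.sub_def] using (((continuous_apply 1).comp hf).mul ((continuous_apply 2).comp hg)).sub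
      (((continuous_apply 2).comp hf).mul ((continuous_apply 1).comp hg))
  · simpa [cross3_e1, Function.comp_def, Pi.mul_def, Pi.sub_def] using (((continuous_apply 2).comp hf).mul ((continuous_apply 0).comp hg)).sub
      (((continuous_apply 0).comp hf).mul ((continuous_apply 2).comp hg))
  · simpa [cross3_e2, Function.comp_def, Pi.mul_def, Pi.sub_def] using (((continuous_apply 0).comp hf).mul ((continuous_apply 1).comp hg)).sub
      (((continuous_apply 1).comp hf).mul ((continuous_apply 0).comp hg))


end Stmt11Helpers

section CurveFacts

variable {γ : ℝ → R3}

lemma smoothInf (hreg : IsRegularCurve γ) : ContDiff ℝ (⊤:ℕ∞) γ := hreg.smooth.of_le (by simp)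

lemma smooth1 (hreg : IsRegularCurve γ) : ContDiff ℝ (⊤:ℕ∞) (deriv γ) :=
  (contDiff_infty_iff_deriv.mp (smoothInf hreg)).2

lemma smooth2 (hreg : IsRegularCurve γ) : ContDiff ℝ (⊤:ℕ∞) (deriv (deriv γ)) :=
  (contDiff_infty_iff_deriv.mp (smooth1 hreg)).2

lemma hasD0 (hreg : IsRegularCurve γ) (s : ℝ) : HasDerivAt γ (deriv γ s) s :=
  ((smoothInf hreg).differentiable (by simp) s).hasDerivAt

lemma hasD1 (hreg : IsRegularCurve γ) (s : ℝ) : HasDerivAt (deriv γ) (deriv (deriv γ) s) s :=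
  ((smooth1 hreg).differentiable (by simp) s).hasDerivAt

lemma hasD2 (hreg : IsRegularCurve γ) (s : ℝ) :
    HasDerivAt (deriv (deriv γ)) (deriv (deriv (deriv γ)) s) s :=
  ((smooth2 hreg).differentiable (by simp) s).hasDerivAt

lemma Npos (hreg : IsRegularCurve γ) (s : ℝ) : 0 < norm3 (deriv γ s) :=
  norm3_pos (hreg.reg s)

lemma Nne (hreg : IsRegularCurve γ) (s : ℝ) : norm3 (deriv γ s) ≠ 0 :=
  ne_of_gt (Npos hreg s)

lemma Nsq (s : ℝ) : norm3 (deriv γ s) ^ 2 = dot3 (deriv γ s) (deriv γ s) := norm3_sq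

lemma dot_d_g (hreg : IsRegularCurve γ) (s : ℝ) : dot3 (deriv γ s) (γ s) = 0 := by
  have hfun : (fun u => dot3 (γ u) (γ u)) = fun _ => (1:ℝ) := funext hreg.sphere
  have h1 := hasDerivAt_dot3 (hasD0 hreg s) (hasD0 hreg s)
  rw [hfun] at h1
  have h2 := h1.unique (hasDerivAt_const s 1)
  rw [d3comm (γ s)] at h2
  linarith

lemma dot_g_d (hreg : IsRegularCurve γ) (s : ℝ) : dot3 (γ s) (deriv γ s) = 0 := by
  rw [d3comm]; exact dot_d_g hreg s

lemma dot_dd_g (hreg : IsRegularCurve γ) (s : ℝ) :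
    dot3 (deriv (deriv γ) s) (γ s) = -dot3 (deriv γ s) (deriv γ s) := by
  have hfun : (fun u => dot3 (deriv γ u) (γ u)) = fun _ => (0:ℝ) := funext (dot_d_g hreg)
  have h1 := hasDerivAt_dot3 (hasD1 hreg s) (hasD0 hreg s)
  rw [hfun] at h1
  have h2 := h1.unique (hasDerivAt_const s 0)
  linarith

lemma n_dot_g (s : ℝ) : dot3 (unitNormal γ s) (γ s) = 0 := by
  unfold unitNormal; rw [dot3_smul_left, dot3_cross_left]; ring

lemma n_dot_d (s : ℝ) : dot3 (unitNormal γ s) (deriv γ s) = 0 := by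
  unfold unitNormal; rw [dot3_smul_left, dot3_cross_right]; ring

lemma g_dot_n (s : ℝ) : dot3 (γ s) (unitNormal γ s) = 0 := by
  rw [d3comm]; exact n_dot_g s

lemma n_dot_n (hreg : IsRegularCurve γ) (s : ℝ) :
    dot3 (unitNormal γ s) (unitNormal γ s) = 1 := by
  unfold unitNormal
  rw [dot3_smul_left, dot3_smul_right, lagrange3, hreg.sphere s, dot_g_d hreg s, ← Nsq]
  field_simp [Nne hreg s]
  ring

lemma dd_dot_n (hreg : IsRegularCurve γ) (s : ℝ) :
    dot3 (deriv (deriv γ) s) (unitNormal γ s) = kappa γ s * norm3 (deriv γ s) ^ 2 := by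
  unfold unitNormal kappa
  rw [dot3_smul_right,
    show dot3 (deriv (deriv γ) s) (cross3 (γ s) (deriv γ s)) =
      det3 (deriv (deriv γ) s) (γ s) (deriv γ s) from rfl, det3_cyclic]
  field_simp [Nne hreg s]

lemma hasDerivAt_N (hreg : IsRegularCurve γ) (s : ℝ) :
    HasDerivAt (fun u => norm3 (deriv γ u))
      (dot3 (deriv (deriv γ) s) (deriv γ s) / norm3 (deriv γ s)) s := by
  have hDne : dot3 (deriv γ s) (deriv γ s) ≠ 0 := ne_of_gt (dot3_self_pos (hreg.reg s))
  have hD : HasDerivAt (fun u => dot3 (deriv γ u) (deriv γ u))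
      (dot3 (deriv (deriv γ) s) (deriv γ s) + dot3 (deriv γ s) (deriv (deriv γ) s)) s :=
    hasDerivAt_dot3 (hasD1 hreg s) (hasD1 hreg s)
  have h1 := (Real.hasDerivAt_sqrt hDne).comp s hD
  have hval : 1 / (2 * Real.sqrt (dot3 (deriv γ s) (deriv γ s))) *
      (dot3 (deriv (deriv γ) s) (deriv γ s) + dot3 (deriv γ s) (deriv (deriv γ) s)) =
      dot3 (deriv (deriv γ) s) (deriv γ s) / norm3 (deriv γ s) := by
    rw [d3comm (deriv γ s) (deriv (deriv γ) s),
      show Real.sqrt (dot3 (deriv γ s) (deriv γ s)) = norm3 (deriv γ s) from rfl]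
    field_simp [Nne hreg s]
    ring
  rw [← hval]
  exact h1

lemma hasDerivAt_n (hreg : IsRegularCurve γ) (s : ℝ) :
    HasDerivAt (unitNormal γ) (-(kappa γ s) • deriv γ s) s := by
  have hNinv := (hasDerivAt_N hreg s).inv (Nne hreg s)
  have hcr : HasDerivAt (fun u => cross3 (γ u) (deriv γ u))
      (cross3 (deriv γ s) (deriv γ s) + cross3 (γ s) (deriv (deriv γ) s)) s :=
    hasDerivAt_cross3 (hasD0 hreg s) (hasD1 hreg s)
  have hn0 := hNinv.smul hcr
  set V := (norm3 (deriv γ s))⁻¹ •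
      (cross3 (deriv γ s) (deriv γ s) + cross3 (γ s) (deriv (deriv γ) s)) +
      (-(dot3 (deriv (deriv γ) s) (deriv γ s) / norm3 (deriv γ s)) / norm3 (deriv γ s) ^ 2) •
      cross3 (γ s) (deriv γ s) with hVdef
  have hn' : HasDerivAt (unitNormal γ) V s := hn0
  -- characterize V by its dot products
  have hb1 : dot3 V (γ s) = 0 := by
    have hfun : (fun u => dot3 (unitNormal γ u) (γ u)) = fun _ => (0:ℝ) := funext n_dot_g
    have h1 := hasDerivAt_dot3 hn' (hasD0 hreg s)
    rw [hfun] at h1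
    have h2 := h1.unique (hasDerivAt_const s 0)
    have h3 := n_dot_d (γ := γ) s
    linarith
  have hb2 : dot3 V (deriv γ s) = -(kappa γ s * norm3 (deriv γ s) ^ 2) := by
    have hfun : (fun u => dot3 (unitNormal γ u) (deriv γ u)) = fun _ => (0:ℝ) :=
      funext n_dot_d
    have h1 := hasDerivAt_dot3 hn' (hasD1 hreg s)
    rw [hfun] at h1
    have h2 := h1.unique (hasDerivAt_const s 0)
    have h3 : dot3 (unitNormal γ s) (deriv (deriv γ) s) = kappa γ s * norm3 (deriv γ s) ^ 2 := by
      rw [d3comm]; exact dd_dot_n hreg s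
    linarith
  have hb3 : dot3 V (unitNormal γ s) = 0 := by
    have hfun : (fun u => dot3 (unitNormal γ u) (unitNormal γ u)) = fun _ => (1:ℝ) :=
      funext (n_dot_n hreg)
    have h1 := hasDerivAt_dot3 hn' hn'
    rw [hfun] at h1
    have h2 := h1.unique (hasDerivAt_const s 1)
    rw [d3comm (unitNormal γ s) V] at h2
    linarith
  -- expansion in the orthonormal basis (γ s, T s, n s)
  have hvv : dot3 ((norm3 (deriv γ s))⁻¹ • deriv γ s) ((norm3 (deriv γ s))⁻¹ • deriv γ s) = 1 := by
    rw [dot3_smul_left, dot3_smul_right, ← Nsq]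
    field_simp [Nne hreg s]
  have huv : dot3 (γ s) ((norm3 (deriv γ s))⁻¹ • deriv γ s) = 0 := by
    rw [dot3_smul_right, dot_g_d hreg s]; ring
  have hcrT : cross3 (γ s) ((norm3 (deriv γ s))⁻¹ • deriv γ s) = unitNormal γ s := by
    rw [cross3_smul_right]; rfl
  have hexp := expand3 (hreg.sphere s) hvv huv V
  rw [hcrT, hb1, hb3, dot3_smul_right, hb2] at hexp
  have hVeq : V = -(kappa γ s) • deriv γ s := by
    rw [hexp, zero_smul, zero_smul, zero_add, add_zero, smul_smul]
    congr 1
    rw [pow_two]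
    field_simp [Nne hreg s]
  rw [hVeq] at hn'
  exact hn'

end CurveFacts



lemma dot3_zero_right (a : R3) : dot3 a 0 = 0 := by unfold dot3; simp

/-- The (scaled) center field `w(t) = μ γ(t) + n(t)`. -/
def wvec (μ : ℝ) (γ : ℝ → R3) (t : ℝ) : R3 := μ • γ t + unitNormal γ t

section CurveFacts2

variable {γ : ℝ → R3}

lemma hasDerivAt_w (hreg : IsRegularCurve γ) (μ : ℝ) (s : ℝ) :
    HasDerivAt (wvec μ γ) ((μ - kappa γ s) • deriv γ s) s := by
  have h3 := ((hasD0 hreg s).const_smul μ).add (hasDerivAt_n hreg s)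
  have hv : μ • deriv γ s + -(kappa γ s) • deriv γ s = (μ - kappa γ s) • deriv γ s := by
    module
  rw [← hv]
  exact h3

lemma diffAt_kappa (hreg : IsRegularCurve γ) (s : ℝ) : DifferentiableAt ℝ (kappa γ) s := by
  have hnum := hasDerivAt_dot3 (hasD0 hreg s)
    (hasDerivAt_cross3 (hasD1 hreg s) (hasD2 hreg s))
  have hden := (hasDerivAt_N hreg s).pow 3
  have hdne : norm3 (deriv γ s) ^ 3 ≠ 0 := pow_ne_zero _ (Nne hreg s)
  exact (hnum.div hden hdne).differentiableAt

lemma contG0 (hreg : IsRegularCurve γ) : Continuous γ := (smoothInf hreg).continuous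
lemma contG1 (hreg : IsRegularCurve γ) : Continuous (deriv γ) := (smooth1 hreg).continuous
lemma contG2 (hreg : IsRegularCurve γ) : Continuous (deriv (deriv γ)) := (smooth2 hreg).continuous

lemma contN (hreg : IsRegularCurve γ) : Continuous fun s => norm3 (deriv γ s) :=
  Real.continuous_sqrt.comp (continuous_dot3 (contG1 hreg) (contG1 hreg))

lemma contU (hreg : IsRegularCurve γ) : Continuous (unitNormal γ) :=
  ((contN hreg).inv₀ (Nne hreg)).smul (continuous_cross3 (contG0 hreg) (contG1 hreg))

lemma contW (hreg : IsRegularCurve γ) (μ : ℝ) : Continuous (wvec μ γ) :=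
  ((contG0 hreg).const_smul μ).add (contU hreg)

end CurveFacts2

/-- If `ψ(τ) = 0`, `ψ'(τ) = 0` and `ψ''(τ) < 0`, then `ψ` takes negative values
just to the right of `τ`. -/
lemma neg_after {ψ Ψ : ℝ → ℝ} {τ L : ℝ} (hasψ : ∀ t, HasDerivAt ψ (Ψ t) t)
    (hΨτ : Ψ τ = 0) (hL : HasDerivAt Ψ L τ) (hLneg : L < 0) (hψτ : ψ τ = 0) :
    ∀ ε > 0, ∃ s, τ < s ∧ s < τ + ε ∧ ψ s < 0 := by
  intro ε hε
  have hslope := hasDerivAt_iff_tendsto_slope.mp hL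
  have hev : ∀ᶠ x in nhdsWithin τ {τ}ᶜ, slope Ψ τ x < 0 :=
    hslope.eventually (eventually_lt_nhds hLneg)
  have hev2 : ∀ᶠ x in nhdsWithin τ (Set.Ioi τ), slope Ψ τ x < 0 :=
    hev.filter_mono (nhdsWithin_mono τ (fun x hx => ne_of_gt hx))
  obtain ⟨u, hu, hsub⟩ := mem_nhdsGT_iff_exists_Ioo_subset.mp hev2
  set m := (τ + min u (τ + ε)) / 2 with hm
  have hmin : τ < min u (τ + ε) := lt_min hu (by linarith)
  have hτm : τ < m := by simp only [hm]; linarith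
  have hmu : m < u := by
    have := min_le_left u (τ + ε); simp only [hm]; linarith
  have hmε : m < τ + ε := by
    have := min_le_right u (τ + ε); simp only [hm]; linarith
  have hΨneg : ∀ x ∈ Set.Ioo τ m, Ψ x < 0 := by
    intro x hx
    have hx' : x ∈ Set.Ioo τ u := ⟨hx.1, lt_trans hx.2 hmu⟩
    have hs : slope Ψ τ x < 0 := hsub hx'
    have hxτ : 0 < x - τ := by linarith [hx.1]
    have heq : slope Ψ τ x = Ψ x / (x - τ) := by rw [slope_def_field, hΨτ, sub_zero]
    rw [heq] at hs
    by_contra hcon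
    push_neg at hcon
    have : 0 ≤ Ψ x / (x - τ) := div_nonneg hcon hxτ.le
    linarith
  have hcont : ContinuousOn ψ (Set.Icc τ m) := fun x _ =>
    ((hasψ x).differentiableAt.continuousAt).continuousWithinAt
  have hanti : StrictAntiOn ψ (Set.Icc τ m) := by
    apply strictAntiOn_of_deriv_neg (convex_Icc τ m) hcont
    intro x hx
    rw [interior_Icc] at hx
    rw [(hasψ x).deriv]
    exact hΨneg x hx
  refine ⟨m, hτm, hmε, ?_⟩
  have := hanti (Set.left_mem_Icc.mpr hτm.le) (Set.right_mem_Icc.mpr hτm.le) hτm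
  rw [hψτ] at this
  exact this

/-- Diagonal positivity: near any diagonal point, `G(t,x) > 0` for `t < x`. -/
lemma diag_pos {γ : ℝ → R3} (hreg : IsRegularCurve γ) {μ : ℝ} (hκ : ∀ s, μ < kappa γ s)
    (sb : ℝ) :
    ∃ δ > 0, ∀ t x : ℝ, |t - sb| < δ → |x - sb| < δ → t < x →
      0 < dot3 (γ x) (wvec μ γ t) - μ := by
  have hΦcont : Continuous (fun p : ℝ × ℝ => dot3 (deriv (deriv γ) p.2) (wvec μ γ p.1)) :=
    continuous_dot3 ((contG2 hreg).comp continuous_snd) ((contW hreg μ).comp continuous_fst)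
  have hΦval : dot3 (deriv (deriv γ) sb) (wvec μ γ sb)
      = (kappa γ sb - μ) * norm3 (deriv γ sb) ^ 2 := by
    unfold wvec
    rw [dot3_add_right, dot3_smul_right, dot_dd_g hreg sb, dd_dot_n hreg sb, ← Nsq]
    ring
  have hΦpos : 0 < dot3 (deriv (deriv γ) sb) (wvec μ γ sb) := by
    rw [hΦval]
    have h1 := hκ sb
    have h2 := Npos hreg sb
    nlinarith [pow_pos h2 2]
  obtain ⟨δ, hδpos, hball⟩ := Metric.continuousAt_iff.mp hΦcont.continuousAt
    (dot3 (deriv (deriv γ) sb) (wvec μ γ sb)) hΦpos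
  refine ⟨δ, hδpos, ?_⟩
  intro t x ht hx htx
  have hbox : ∀ u ∈ Set.Icc t x, 0 < dot3 (deriv (deriv γ) u) (wvec μ γ t) := by
    intro u hu
    have h1 : |u - sb| < δ := by
      rw [abs_lt] at ht hx ⊢
      constructor
      · linarith [hu.1, ht.1]
      · linarith [hu.2, hx.2]
    have hd : dist ((t, u) : ℝ × ℝ) (sb, sb) < δ := by
      rw [Prod.dist_eq]
      simp only [Real.dist_eq]
      exact max_lt ht h1
    have h2 := hball hd
    rw [Real.dist_eq, abs_lt] at h2
    linarith [h2.1]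
  have hF1deriv : ∀ u, HasDerivAt (fun y => dot3 (deriv γ y) (wvec μ γ t))
      (dot3 (deriv (deriv γ) u) (wvec μ γ t)) u := by
    intro u
    have h1 := hasDerivAt_dot3 (hasD1 hreg u) (hasDerivAt_const u (wvec μ γ t))
    simpa [dot3_zero_right] using h1
  have hF1t : dot3 (deriv γ t) (wvec μ γ t) = 0 := by
    unfold wvec
    have h1 : dot3 (deriv γ t) (unitNormal γ t) = 0 := by rw [d3comm]; exact n_dot_d t
    rw [dot3_add_right, dot3_smul_right, dot_d_g hreg t, h1]
    ring
  have hmono1 : StrictMonoOn (fun y => dot3 (deriv γ y) (wvec μ γ t)) (Set.Icc t x) := by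
    apply strictMonoOn_of_deriv_pos (convex_Icc t x)
    · exact fun y _ => ((hF1deriv y).differentiableAt.continuousAt).continuousWithinAt
    · intro u hu
      rw [interior_Icc] at hu
      rw [(hF1deriv u).deriv]
      exact hbox u ⟨hu.1.le, hu.2.le⟩
  have hF1pos : ∀ u ∈ Set.Ioc t x, 0 < dot3 (deriv γ u) (wvec μ γ t) := by
    intro u hu
    have := hmono1 (Set.left_mem_Icc.mpr htx.le) ⟨hu.1.le, hu.2⟩ hu.1
    simpa [hF1t] using this
  have hF0deriv : ∀ u, HasDerivAt (fun y => dot3 (γ y) (wvec μ γ t) - μ)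
      (dot3 (deriv γ u) (wvec μ γ t)) u := by
    intro u
    have h1 := (hasDerivAt_dot3 (hasD0 hreg u) (hasDerivAt_const u (wvec μ γ t))).sub_const μ
    simpa [dot3_zero_right] using h1
  have hF0t : dot3 (γ t) (wvec μ γ t) - μ = 0 := by
    unfold wvec
    rw [dot3_add_right, dot3_smul_right, hreg.sphere t, g_dot_n t]
    ring
  have hmono0 : StrictMonoOn (fun y => dot3 (γ y) (wvec μ γ t) - μ) (Set.Icc t x) := by
    apply strictMonoOn_of_deriv_pos (convex_Icc t x)
    · exact fun y _ => ((hF0deriv y).differentiableAt.continuousAt).continuousWithinAt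
    · intro u hu
      rw [interior_Icc] at hu
      rw [(hF0deriv u).deriv]
      exact hF1pos u ⟨hu.1, hu.2.le⟩
  have := hmono0 (Set.left_mem_Icc.mpr htx.le) (Set.right_mem_Icc.mpr htx.le) htx
  simpa [hF0t] using this



set_option maxHeartbeats 1000000 in
/-- Step 1: the circle `C` is tangent to the curve at `γ(d1)` with inward normal, hence
`w(d1) = √(1+μ²) o` and the curve after `d1` is strictly inside the disk. -/
lemma step1_key (μ : ℝ) (γ1 : ℝ → R3) (a1 b1 c1 d1 : ℝ) (o : R3)
    (hμ : 0 < μ) (hreg : IsRegularCurve γ1)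
    (hκ : ∀ s, μ < kappa γ1 s)
    (hshell : IsNegativeShell γ1 a1 b1)
    (ho : dot3 o o = 1)
    (hin : γ1 '' Set.Icc a1 b1 ⊆ closure (muDisk μ o))
    (horder : a1 < c1 ∧ c1 < d1 ∧ d1 < b1)
    (hmeet : muCircle μ o ∩ γ1 '' Set.Icc a1 b1 = {γ1 d1, γ1 c1}) :
    ∀ x, d1 < x → x ≤ b1 → 0 < dot3 (γ1 x) (wvec μ γ1 d1) - μ := by
  obtain ⟨hac, hcd, hdb⟩ := horder
  have hab : a1 < b1 := hshell.1.1
  have hinj : Set.InjOn γ1 (Set.Ico a1 b1) := hshell.1.2.1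
  have hclose : γ1 a1 = γ1 b1 := hshell.1.2.2.1
  set S := Real.sqrt (1 + μ ^ 2) with hS
  have hSpos : 0 < S := Real.sqrt_pos.mpr (by positivity)
  have hSsq : S ^ 2 = 1 + μ ^ 2 := Real.sq_sqrt (by positivity)
  set c := μ / S with hc
  have hcpos : 0 < c := div_pos hμ hSpos
  have hcS : c * S = μ := by rw [hc, div_mul_cancel₀ μ hSpos.ne']
  -- (i) the curve is inside the closed disk
  have hg0 : ∀ s ∈ Set.Icc a1 b1, c ≤ dot3 (γ1 s) o := by
    intro s hs
    have hcl : closure (muDisk μ o) ⊆ {v : R3 | c ≤ dot3 v o} := by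
      apply closure_minimal
      · intro v hv
        exact le_of_lt hv.2
      · exact isClosed_le continuous_const (continuous_dot3 continuous_id continuous_const)
    exact hcl (hin (Set.mem_image_of_mem γ1 hs))
  -- (ii) zeros are P or Q
  have hzero : ∀ s ∈ Set.Icc a1 b1, dot3 (γ1 s) o = c → γ1 s = γ1 d1 ∨ γ1 s = γ1 c1 := by
    intro s hs heq
    have hmem : γ1 s ∈ muCircle μ o ∩ γ1 '' Set.Icc a1 b1 :=
      ⟨⟨hreg.sphere s, heq⟩, Set.mem_image_of_mem γ1 hs⟩
    rw [hmeet] at hmem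
    simpa using hmem
  -- (iii) P and Q on the circle
  have hPwhere : γ1 d1 ∈ muCircle μ o ∩ γ1 '' Set.Icc a1 b1 := by
    rw [hmeet]; simp
  have hPdot : dot3 (γ1 d1) o = c := hPwhere.1.2
  -- (v) strictly inside after d1
  have hgpos : ∀ x, d1 < x → x ≤ b1 → c < dot3 (γ1 x) o := by
    intro x hd1x hxb1
    have hxIcc : x ∈ Set.Icc a1 b1 := ⟨by linarith, hxb1⟩
    rcases lt_or_eq_of_le (hg0 x hxIcc) with h | h
    · exact h
    exfalso
    rcases hzero x hxIcc h.symm with hP | hQ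
    · rcases lt_or_eq_of_le hxb1 with hxb | hxb
      · have := hinj ⟨by linarith, hxb⟩ ⟨by linarith, hdb⟩ hP
        linarith
      · rw [hxb, ← hclose] at hP
        have := hinj ⟨le_refl a1, hab⟩ ⟨by linarith, hdb⟩ hP
        linarith
    · rcases lt_or_eq_of_le hxb1 with hxb | hxb
      · have := hinj ⟨by linarith, hxb⟩ ⟨by linarith, by linarith⟩ hQ
        linarith
      · rw [hxb, ← hclose] at hQ
        have := hinj ⟨le_refl a1, hab⟩ ⟨by linarith, by linarith⟩ hQ
        linarith
  -- (vi) tangency at d1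
  have hgd : ∀ s, HasDerivAt (fun u => dot3 (γ1 u) o - c) (dot3 (deriv γ1 s) o) s := by
    intro s
    have h1 := (hasDerivAt_dot3 (hasD0 hreg s) (hasDerivAt_const s o)).sub_const c
    simpa [dot3_zero_right] using h1
  have hdotd : dot3 (deriv γ1 d1) o = 0 := by
    have hmin : IsLocalMin (fun u => dot3 (γ1 u) o - c) d1 := by
      apply Filter.eventually_of_mem (Ioo_mem_nhds (by linarith : a1 < d1) hdb)
      intro x hx
      have := hg0 x ⟨hx.1.le, hx.2.le⟩
      simp only [hPdot]
      linarith
    have h1 := hmin.deriv_eq_zero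
    rw [(hgd d1).deriv] at h1
    exact h1
  -- (vii) expansion of o in the basis at d1
  set β := dot3 o (unitNormal γ1 d1) with hβ
  have hvv : dot3 ((norm3 (deriv γ1 d1))⁻¹ • deriv γ1 d1)
      ((norm3 (deriv γ1 d1))⁻¹ • deriv γ1 d1) = 1 := by
    rw [dot3_smul_left, dot3_smul_right, ← Nsq]
    field_simp [Nne hreg d1]
  have huv : dot3 (γ1 d1) ((norm3 (deriv γ1 d1))⁻¹ • deriv γ1 d1) = 0 := by
    rw [dot3_smul_right, dot_g_d hreg d1]; ring
  have hcrT : cross3 (γ1 d1) ((norm3 (deriv γ1 d1))⁻¹ • deriv γ1 d1) = unitNormal γ1 d1 := by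
    rw [cross3_smul_right]; rfl
  have hexp := expand3 (hreg.sphere d1) hvv huv o
  rw [hcrT] at hexp
  have ho1 : dot3 o (γ1 d1) = c := by rw [d3comm]; exact hPdot
  have ho2 : dot3 o ((norm3 (deriv γ1 d1))⁻¹ • deriv γ1 d1) = 0 := by
    rw [dot3_smul_right, d3comm, hdotd]; ring
  rw [ho1, ho2, zero_smul, add_zero] at hexp
  rw [← hβ] at hexp
  -- hexp : o = c • γ1 d1 + β • unitNormal γ1 d1
  -- (viii) c² + β² = 1
  have hnorm : c ^ 2 + β ^ 2 = 1 := by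
    have h1 : dot3 o o = c ^ 2 + β ^ 2 := by
      rw [hexp]
      rw [dot3_add_left, dot3_add_right, dot3_add_right, dot3_smul_left, dot3_smul_left,
        dot3_smul_left, dot3_smul_left, dot3_smul_right, dot3_smul_right, dot3_smul_right,
        dot3_smul_right, hreg.sphere d1, n_dot_n hreg d1, g_dot_n, n_dot_g]
      ring
    rw [ho] at h1
    linarith
  -- (ix) β > 0
  have hβpos : 0 < β := by
    by_contra hcon
    push_neg at hcon
    have hL : HasDerivAt (fun s => dot3 (deriv γ1 s) o) (dot3 (deriv (deriv γ1) d1) o) d1 := by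
      have h1 := hasDerivAt_dot3 (hasD1 hreg d1) (hasDerivAt_const d1 o)
      simpa [dot3_zero_right] using h1
    have hLval : dot3 (deriv (deriv γ1) d1) o =
        c * (-dot3 (deriv γ1 d1) (deriv γ1 d1)) + β * (kappa γ1 d1 * norm3 (deriv γ1 d1) ^ 2) := by
      rw [hexp, dot3_add_right, dot3_smul_right, dot3_smul_right, dot_dd_g hreg d1,
        dd_dot_n hreg d1]
    have hLneg : dot3 (deriv (deriv γ1) d1) o < 0 := by
      rw [hLval, ← Nsq]
      have h2 := Npos hreg d1
      have h3 : 0 < kappa γ1 d1 := lt_trans hμ (hκ d1)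
      have h4 : β * (kappa γ1 d1 * norm3 (deriv γ1 d1) ^ 2) ≤ 0 := by
        apply mul_nonpos_of_nonpos_of_nonneg hcon
        positivity
      nlinarith [pow_pos h2 2]
    obtain ⟨s, hs1, hs2, hs3⟩ := neg_after hgd hdotd hL hLneg (by simp [hPdot]) (b1 - d1)
      (by linarith)
    have := hg0 s ⟨by linarith, by linarith⟩
    linarith
  -- (x) β = 1/S
  have hβval : β = 1 / S := by
    have h1 : β ^ 2 = (1 / S) ^ 2 := by
      have : (1 / S) ^ 2 = 1 - c ^ 2 := by
        rw [hc]
        field_simp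
        nlinarith [hSsq]
      rw [this]; linarith
    have h2 : (β - 1 / S) * (β + 1 / S) = 0 := by linear_combination h1
    rcases mul_eq_zero.mp h2 with h | h
    · linarith
    · have : 0 < 1 / S := by positivity
      linarith
  -- (xi) w(d1) = S • o
  have hwo : wvec μ γ1 d1 = S • o := by
    rw [hexp]
    unfold wvec
    rw [smul_add, smul_smul, smul_smul, hβval]
    have e1 : S * c = μ := by rw [mul_comm]; exact hcS
    have e2 : S * (1 / S) = 1 := by field_simp
    rw [e1, e2, one_smul]
  -- (xii) conclusion
  intro x hd1x hxb1
  rw [hwo, dot3_smul_right]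
  have := hgpos x hd1x hxb1
  nlinarith


set_option maxHeartbeats 1600000 in
theorem stmt11 (μ : ℝ) (γ1 : ℝ → R3) (l a1 b1 c1 d1 : ℝ) (o : R3)
    (hμ : 0 < μ) (hreg : IsRegularCurve γ1) (hper : HasPeriod γ1 l)
    (hκ : ∀ s, μ < kappa γ1 s) (hint : b1 - a1 < l)
    (hshell : IsNegativeShell γ1 a1 b1)
    (ho : dot3 o o = 1)
    (hin : γ1 '' Set.Icc a1 b1 ⊆ closure (muDisk μ o))
    (horder : a1 < c1 ∧ c1 < d1 ∧ d1 < b1)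
    (hPQ : γ1 d1 ≠ γ1 c1)
    (hmeet : muCircle μ o ∩ γ1 '' Set.Icc a1 b1 = {γ1 d1, γ1 c1}) :
    ∀ t ∈ Set.Icc d1 b1, ∀ x ∈ Set.Ioc t b1,
      γ1 x ∉ muCircle μ (tangentCenter μ γ1 t) := by
  obtain ⟨hac, hcd, hdb⟩ := horder
  have hab : a1 < b1 := hshell.1.1
  have hinj : Set.InjOn γ1 (Set.Ico a1 b1) := hshell.1.2.1
  have hclose : γ1 a1 = γ1 b1 := hshell.1.2.2.1
  have hSpos : 0 < Real.sqrt (1 + μ ^ 2) := Real.sqrt_pos.mpr (by positivity)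
  have hSne : Real.sqrt (1 + μ ^ 2) ≠ 0 := ne_of_gt hSpos
  intro t ht x hx hmem
  -- convert membership into the scalar equation G t x = 0
  have hzero0 : dot3 (γ1 x) (wvec μ γ1 t) - μ = 0 := by
    have h2 := hmem.2
    rw [show tangentCenter μ γ1 t = (Real.sqrt (1 + μ ^ 2))⁻¹ • wvec μ γ1 t from rfl,
      dot3_smul_right] at h2
    field_simp at h2
    linarith
  -- the set of "bad" right endpoints
  set X : Set ℝ := {y | y ≤ b1 ∧ ∃ t', d1 ≤ t' ∧ t' < y ∧
      dot3 (γ1 y) (wvec μ γ1 t') - μ = 0} with hXdef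
  have hXne : X.Nonempty := ⟨x, hx.2, t, ht.1, hx.1, hzero0⟩
  have hXbdd : BddBelow X := by
    refine ⟨d1, ?_⟩
    rintro y ⟨-, t', ht', hty, -⟩
    linarith
  set xs := sInf X with hxs
  have hXlb : ∀ y ∈ X, xs ≤ y := fun y hy => csInf_le hXbdd hy
  -- attain the infimum
  obtain ⟨u, -, hu_t, hu_mem⟩ := exists_seq_tendsto_sInf hXne hXbdd
  choose hub1 tf htd1 htlt hteq using hu_mem
  have htmem : ∀ n, tf n ∈ Set.Icc d1 b1 := fun n =>
    ⟨htd1 n, le_of_lt (lt_of_lt_of_le (htlt n) (hub1 n))⟩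
  obtain ⟨τ, hτmem, ns, hns, hτlim⟩ := isCompact_Icc.tendsto_subseq htmem
  have hulim : Filter.Tendsto (u ∘ ns) Filter.atTop (nhds xs) := hu_t.comp hns.tendsto_atTop
  have hGcont : Continuous (fun p : ℝ × ℝ => dot3 (γ1 p.2) (wvec μ γ1 p.1) - μ) :=
    (continuous_dot3 ((contG0 hreg).comp continuous_snd)
      ((contW hreg μ).comp continuous_fst)).sub continuous_const
  have hGτ : dot3 (γ1 xs) (wvec μ γ1 τ) - μ = 0 := by
    have hpair : Filter.Tendsto (fun k => ((tf (ns k)), (u (ns k)))) Filter.atTop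
        (nhds (τ, xs)) := hτlim.prodMk_nhds hulim
    have hlim3 : Filter.Tendsto (fun k => dot3 (γ1 (u (ns k))) (wvec μ γ1 (tf (ns k))) - μ)
        Filter.atTop (nhds (dot3 (γ1 xs) (wvec μ γ1 τ) - μ)) :=
      (hGcont.tendsto (τ, xs)).comp hpair
    have heq0 : (fun k => dot3 (γ1 (u (ns k))) (wvec μ γ1 (tf (ns k))) - μ)
        = fun _ => (0:ℝ) := funext fun k => hteq (ns k)
    rw [heq0] at hlim3
    exact tendsto_nhds_unique hlim3 tendsto_const_nhds
  have hτ_le : τ ≤ xs :=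
    le_of_tendsto_of_tendsto' hτlim hulim (fun k => (htlt (ns k)).le)
  have hxsb1 : xs ≤ b1 := le_of_tendsto' hulim (fun k => hub1 (ns k))
  have hd1τ : d1 ≤ τ := hτmem.1
  -- τ < xs via local diagonal positivity
  obtain ⟨δ, hδpos, hδ⟩ := diag_pos hreg hκ xs
  have hτne : τ ≠ xs := by
    intro hcontra
    have e1 : ∀ᶠ k in Filter.atTop, |tf (ns k) - xs| < δ := by
      rw [hcontra] at hτlim
      simpa [Real.dist_eq] using Metric.tendsto_nhds.mp hτlim δ hδpos
    have e2 : ∀ᶠ k in Filter.atTop, |u (ns k) - xs| < δ := by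
      simpa [Real.dist_eq] using Metric.tendsto_nhds.mp hulim δ hδpos
    obtain ⟨k, hk1, hk2⟩ := (e1.and e2).exists
    have h3 := hδ (tf (ns k)) (u (ns k)) hk1 hk2 (htlt (ns k))
    have h4 := hteq (ns k)
    linarith
  have hτlt : τ < xs := lt_of_le_of_ne hτ_le hτne
  have hd1xs : d1 < xs := lt_of_le_of_lt hd1τ hτlt
  -- Claim A: G is positive strictly before xs
  have hA : ∀ t', d1 ≤ t' → ∀ y, t' < y → y < xs →
      0 < dot3 (γ1 y) (wvec μ γ1 t') - μ := by
    intro t' ht' y h1 h2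
    by_contra hcon
    push_neg at hcon
    obtain ⟨δ2, hδ2pos, hδ2⟩ := diag_pos hreg hκ t'
    set x2 := (t' + min y (t' + δ2)) / 2 with hx2
    have hminy : t' < min y (t' + δ2) := lt_min h1 (by linarith)
    have hx2a : t' < x2 := by rw [hx2]; linarith
    have hx2b : x2 < y := by
      have := min_le_left y (t' + δ2); rw [hx2]; linarith
    have hx2c : x2 < t' + δ2 := by
      have := min_le_right y (t' + δ2); rw [hx2]; linarith
    have hGx2 : 0 < dot3 (γ1 x2) (wvec μ γ1 t') - μ := by
      apply hδ2 t' x2 (by simpa using hδ2pos) _ hx2a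
      rw [abs_lt]; constructor <;> linarith
    rcases lt_or_eq_of_le hcon with hneg | heq
    · -- IVT gives a zero strictly before xs
      have hcont1 : ContinuousOn (fun z => dot3 (γ1 z) (wvec μ γ1 t') - μ)
          (Set.Icc x2 y) := by
        apply Continuous.continuousOn
        exact (continuous_dot3 (contG0 hreg) continuous_const).sub continuous_const
      have hmem0 : (0:ℝ) ∈ Set.Icc (dot3 (γ1 y) (wvec μ γ1 t') - μ)
          (dot3 (γ1 x2) (wvec μ γ1 t') - μ) := ⟨hneg.le, hGx2.le⟩
      obtain ⟨z, hz1, hz2⟩ := intermediate_value_Icc' hx2b.le hcont1 hmem0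
      have hzX : z ∈ X := ⟨by linarith [hz1.2, h2], t', ht', by linarith [hz1.1], hz2⟩
      have := hXlb z hzX
      linarith [hz1.2]
    · have hyX : y ∈ X := ⟨by linarith, t', ht', h1, heq⟩
      have := hXlb y hyX
      linarith
  -- Claim B: G(t', xs) is nonnegative for t' before xs
  have hB : ∀ t', d1 ≤ t' → t' < xs → 0 ≤ dot3 (γ1 xs) (wvec μ γ1 t') - μ := by
    intro t' ht' htxs
    by_contra hcon
    push_neg at hcon
    have hcont1 : ContinuousAt (fun z => dot3 (γ1 z) (wvec μ γ1 t') - μ) xs := by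
      apply Continuous.continuousAt
      exact (continuous_dot3 (contG0 hreg) continuous_const).sub continuous_const
    have hev : ∀ᶠ z in nhds xs, dot3 (γ1 z) (wvec μ γ1 t') - μ < 0 :=
      hcont1.eventually (eventually_lt_nhds hcon)
    have hev2 : ∀ᶠ z in nhdsWithin xs (Set.Iio xs),
        dot3 (γ1 z) (wvec μ γ1 t') - μ < 0 := hev.filter_mono nhdsWithin_le_nhds
    have hev3 : ∀ᶠ z in nhdsWithin xs (Set.Iio xs), z ∈ Set.Ioo t' xs :=
      Filter.eventually_of_mem (Ioo_mem_nhdsLT_of_mem ⟨htxs, le_refl xs⟩) (fun z hz => hz)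
    obtain ⟨z, hz1, hz2⟩ := (hev2.and hev3).exists
    have := hA t' ht' z hz2.1 hz2.2
    linarith
  -- derivative of φ = G(·, xs)
  have hφd : ∀ t', HasDerivAt (fun r => dot3 (γ1 xs) (wvec μ γ1 r) - μ)
      ((μ - kappa γ1 t') * dot3 (γ1 xs) (deriv γ1 t')) t' := by
    intro t'
    have h1 := (hasDerivAt_dot3 (hasDerivAt_const t' (γ1 xs))
      (hasDerivAt_w hreg μ t')).sub_const μ
    simpa [dot3_zero_left, dot3_smul_right] using h1
  have hφd1pos : 0 < dot3 (γ1 xs) (wvec μ γ1 d1) - μ :=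
    step1_key μ γ1 a1 b1 c1 d1 o hμ hreg hκ hshell ho hin ⟨hac, hcd, hdb⟩ hmeet xs hd1xs hxsb1
  have hτd1 : d1 < τ := by
    rcases lt_or_eq_of_le hd1τ with h | h
    · exact h
    · exfalso; rw [← h] at hGτ; linarith
  -- τ is a local minimum of φ
  have hmin : IsLocalMin (fun r => dot3 (γ1 xs) (wvec μ γ1 r) - μ) τ := by
    apply Filter.eventually_of_mem (Ioo_mem_nhds hτd1 hτlt)
    intro y hy
    show dot3 (γ1 xs) (wvec μ γ1 τ) - μ ≤ dot3 (γ1 xs) (wvec μ γ1 y) - μ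
    rw [hGτ]
    exact hB y hy.1.le hy.2
  have hΨτ0 : (μ - kappa γ1 τ) * dot3 (γ1 xs) (deriv γ1 τ) = 0 := by
    have h1 := hmin.deriv_eq_zero
    rw [(hφd τ).deriv] at h1
    exact h1
  have hdot0 : dot3 (γ1 xs) (deriv γ1 τ) = 0 := by
    rcases mul_eq_zero.mp hΨτ0 with h | h
    · exfalso; have := hκ τ; linarith
    · exact h
  -- expansion of γ1 xs in the basis at τ
  set p := dot3 (γ1 xs) (γ1 τ) with hp
  set q := dot3 (γ1 xs) (unitNormal γ1 τ) with hq
  have hvv : dot3 ((norm3 (deriv γ1 τ))⁻¹ • deriv γ1 τ)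
      ((norm3 (deriv γ1 τ))⁻¹ • deriv γ1 τ) = 1 := by
    rw [dot3_smul_left, dot3_smul_right, ← Nsq]
    field_simp [Nne hreg τ]
  have huv : dot3 (γ1 τ) ((norm3 (deriv γ1 τ))⁻¹ • deriv γ1 τ) = 0 := by
    rw [dot3_smul_right, dot_g_d hreg τ]; ring
  have hcrT : cross3 (γ1 τ) ((norm3 (deriv γ1 τ))⁻¹ • deriv γ1 τ) = unitNormal γ1 τ := by
    rw [cross3_smul_right]; rfl
  have hexpx := expand3 (hreg.sphere τ) hvv huv (γ1 xs)
  rw [hcrT] at hexpx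
  have hmid : dot3 (γ1 xs) ((norm3 (deriv γ1 τ))⁻¹ • deriv γ1 τ) = 0 := by
    rw [dot3_smul_right, hdot0]; ring
  rw [hmid, zero_smul, add_zero, ← hp, ← hq] at hexpx
  -- hexpx : γ1 xs = p • γ1 τ + q • unitNormal γ1 τ
  have hpq1 : p ^ 2 + q ^ 2 = 1 := by
    have h1 : dot3 (γ1 xs) (γ1 xs) = p ^ 2 + q ^ 2 := by
      rw [hexpx]
      rw [dot3_add_left, dot3_add_right, dot3_add_right, dot3_smul_left, dot3_smul_left,
        dot3_smul_left, dot3_smul_left, dot3_smul_right, dot3_smul_right, dot3_smul_right,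
        dot3_smul_right, hreg.sphere τ, n_dot_n hreg τ, g_dot_n, n_dot_g]
      ring
    rw [hreg.sphere xs] at h1
    linarith
  have hqp : μ * p + q = μ := by
    have h1 := hGτ
    rw [show wvec μ γ1 τ = μ • γ1 τ + unitNormal γ1 τ from rfl, dot3_add_right,
      dot3_smul_right, ← hp, ← hq] at h1
    linarith
  by_cases hp1 : p = 1
  · -- the touching point coincides with γ1 τ : impossible by injectivity
    have hq0 : q = 0 := by rw [hp1] at hqp; linarith
    have hgeq : γ1 xs = γ1 τ := by rw [hexpx, hp1, hq0, one_smul, zero_smul, add_zero]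
    have ha1τ : a1 < τ := by linarith
    rcases lt_or_eq_of_le hxsb1 with hlt | heqb
    · have := hinj ⟨ha1τ.le, by linarith⟩ ⟨by linarith, hlt⟩ hgeq.symm
      linarith
    · rw [heqb, ← hclose] at hgeq
      have := hinj ⟨le_refl a1, hab⟩ ⟨ha1τ.le, by linarith⟩ hgeq
      linarith
  · -- the antipodal case: second derivative is negative, contradiction with local min
    have hfac : (p - 1) * ((p + 1) - μ ^ 2 * (1 - p)) = 0 := by
      have hqe : q = μ - μ * p := by linarith
      linear_combination hpq1 - (μ * (1 - p) + q) * hqe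
    have hkey : p + 1 = μ ^ 2 * (1 - p) := by
      rcases mul_eq_zero.mp hfac with h | h
      · exact absurd (by linarith : p = 1) hp1
      · linarith
    have hplt : p < 1 := by nlinarith [hμ]
    have hpos1 : 0 < kappa γ1 τ * q - p := by
      have h1 : 0 < 1 - p := by linarith
      have h2 : 0 < (kappa γ1 τ - μ) * (μ * (1 - p)) :=
        mul_pos (sub_pos.mpr (hκ τ)) (mul_pos hμ h1)
      have hqe : q = μ - μ * p := by linarith
      have h3 : kappa γ1 τ * q - p = (kappa γ1 τ - μ) * (μ * (1 - p)) + 1 := by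
        rw [hqe]; linear_combination -hkey
      linarith
    have hκd := (diffAt_kappa hreg τ).hasDerivAt
    have hf1 : HasDerivAt (fun r => μ - kappa γ1 r) (-(deriv (kappa γ1) τ)) τ :=
      hκd.const_sub μ
    have hf2 : HasDerivAt (fun r => dot3 (γ1 xs) (deriv γ1 r))
        (dot3 (γ1 xs) (deriv (deriv γ1) τ)) τ := by
      have h1 := hasDerivAt_dot3 (hasDerivAt_const τ (γ1 xs)) (hasD1 hreg τ)
      simpa [dot3_zero_left] using h1
    have hΨhas := hf1.mul hf2
    have hddval : dot3 (γ1 xs) (deriv (deriv γ1) τ) =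
        (kappa γ1 τ * q - p) * norm3 (deriv γ1 τ) ^ 2 := by
      have e1 : dot3 (γ1 τ) (deriv (deriv γ1) τ)
          = -(dot3 (deriv γ1 τ) (deriv γ1 τ)) := by rw [d3comm]; exact dot_dd_g hreg τ
      have e2 : dot3 (unitNormal γ1 τ) (deriv (deriv γ1) τ)
          = kappa γ1 τ * norm3 (deriv γ1 τ) ^ 2 := by rw [d3comm]; exact dd_dot_n hreg τ
      rw [hexpx, dot3_add_left, dot3_smul_left, dot3_smul_left, e1, e2, ← Nsq]
      ring
    have hLneg : -(deriv (kappa γ1) τ) * dot3 (γ1 xs) (deriv γ1 τ) +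
        (μ - kappa γ1 τ) * dot3 (γ1 xs) (deriv (deriv γ1) τ) < 0 := by
      rw [hdot0, hddval]
      have h1 : μ - kappa γ1 τ < 0 := by linarith [hκ τ]
      have h2 := pow_pos (Npos hreg τ) 2
      have h3 := mul_neg_of_neg_of_pos h1 (mul_pos hpos1 h2)
      have h4 : (μ - kappa γ1 τ) * ((kappa γ1 τ * q - p) * norm3 (deriv γ1 τ) ^ 2)
          = (μ - kappa γ1 τ) * (kappa γ1 τ * q - p) * norm3 (deriv γ1 τ) ^ 2 := by ring
      linarith [h3]
    obtain ⟨s, hs1, hs2, hs3⟩ := neg_after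
      (Ψ := fun r => (μ - kappa γ1 r) * dot3 (γ1 xs) (deriv γ1 r))
      hφd hΨτ0 hΨhas hLneg hGτ (xs - τ) (by linarith)
    have := hB s (by linarith) (by linarith)
    linarith
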